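/- Let f : S² → ℝ² be continuous. Then the image under f of the coincidence set {x | f(x) = f(-x)} is a nonempty compact subset of ℝ². -/

import Mathlib

/-!
Identify `ℝ²` with `ℂ`. If `f x ≠ f (-x)` for all `x`, then `g x = f x - f (-x)` is an odd
map `S² → ℂ \ {0}`. Precomposing with inverse stereographic projection gives a nonvanishing
map `G` on the plane which is odd on the unit circle. Since the plane is simply connected, `G`
has a continuous square root `r`; then `q z = r (-z) / r z` squares to `-1` on the circle, so by
connectedness it is constant there, while `q (-z) = (q z)⁻¹ = -q z`. Hence coincidence points
exist; they form a closed, hence compact, subset of `S²`, whose image under `f` is compact.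
-/

noncomputable abbrev S2 := Metric.sphere (0 : EuclideanSpace ℝ (Fin 3)) 1

open Complex Metric

theorem exists_continuous_sq_eq {X : Type*} [TopologicalSpace X] [SimplyConnectedSpace X]
    [LocallyPathConnectedSpace X] {g : X → ℂ} (hg : Continuous g) (hg0 : ∀ x, g x ≠ 0) :
    ∃ r : X → ℂ, Continuous r ∧ ∀ x, r x ^ 2 = g x := by
  obtain ⟨x₀⟩ : Nonempty X := inferInstance
  obtain ⟨r₀, hr₀⟩ := IsAlgClosed.exists_pow_nat_eq (g x₀) two_pos
  obtain ⟨r, ⟨-, hr⟩, -⟩ := (isCoveringMapOn_npow 2 two_ne_zero).existsUnique_continuousMap_lifts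
    ⟨g, hg⟩ hr₀ hg0
  exact ⟨r, r.continuous, congrFun hr⟩

theorem exists_norm_eq_one_apply_neg_ne_neg {G : ℂ → ℂ} (hG : Continuous G)
    (hG0 : ∀ z, G z ≠ 0) : ∃ z : ℂ, ‖z‖ = 1 ∧ G (-z) ≠ -G z := by
  by_contra! hodd
  obtain ⟨r, hr, hrG⟩ := exists_continuous_sq_eq hG hG0
  have hr0 (z : ℂ) : r z ≠ 0 := fun h => hG0 z (by rw [← hrG, h, zero_pow two_ne_zero])
  set q : ℂ → ℂ := fun z => r (-z) / r z
  have hq_sq {z : ℂ} (hz : ‖z‖ = 1) : q z ^ 2 = -1 := by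
    rw [div_pow, hrG, hrG, hodd z hz, neg_div, div_self (hG0 z)]
  have hq_mapsTo : Set.MapsTo q (sphere 0 1) {I, -I} := fun z hz => by
    have : (q z - I) * (q z + I) = 0 := by
      linear_combination hq_sq (mem_sphere_zero_iff_norm.mp hz) - I_sq
    rcases mul_eq_zero.mp this with h | h
    · exact .inl (sub_eq_zero.mp h)
    · exact .inr (eq_neg_of_add_eq_zero_left h)
  have hq_const : q (-1) = q 1 :=
    (isPreconnected_sphere (by simp) 0 1).constant_of_mapsTo ⟨inferInstance⟩
      ((hr.comp continuous_neg).div hr hr0).continuousOn hq_mapsTo (by simp) (by simp)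
  have hq_mul : q (-1) * q 1 = 1 := by
    simp only [q, neg_neg]
    field_simp [hr0]
  rw [hq_const, ← sq, hq_sq (by simp)] at hq_mul
  norm_num at hq_mul

noncomputable def inverseStereographic (z : ℂ) : S2 :=
  ⟨(1 + normSq z)⁻¹ • !₂[2 * z.re, 2 * z.im, normSq z - 1], by
    have h : 0 < 1 + normSq z := by linarith [normSq_nonneg z]
    rw [mem_sphere_zero_iff_norm, norm_smul, EuclideanSpace.norm_eq, Fin.sum_univ_three]
    simp only [Real.norm_eq_abs, sq_abs, Matrix.cons_val_zero, Matrix.cons_val_one,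
      Matrix.cons_val_two, Matrix.head_cons, Matrix.tail_cons, abs_inv]
    rw [show (2 * z.re) ^ 2 + (2 * z.im) ^ 2 + (normSq z - 1) ^ 2 = (1 + normSq z) ^ 2 by
      rw [normSq_apply]; ring, Real.sqrt_sq h.le, abs_of_pos h, inv_mul_cancel₀ h.ne']⟩

@[fun_prop]
theorem continuous_inverseStereographic : Continuous inverseStereographic :=
  .subtype_mk (by fun_prop (disch := intro z; linarith [normSq_nonneg z])) _

theorem inverseStereographic_neg {z : ℂ} (hz : ‖z‖ = 1) :
    inverseStereographic (-z) = -inverseStereographic z := by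
  have h : normSq z = 1 := by rw [normSq_eq_norm_sq, hz, one_pow]
  ext i
  fin_cases i <;> simp [inverseStereographic, h]

theorem exists_apply_eq_apply_neg {f : S2 → ℂ} (hf : Continuous f) : ∃ x, f x = f (-x) := by
  by_contra! hne
  obtain ⟨z, hz, hodd⟩ := exists_norm_eq_one_apply_neg_ne_neg
    (G := fun z => f (inverseStereographic z) - f (-inverseStereographic z))
    (by fun_prop) fun z => sub_ne_zero.mpr (hne _)
  apply hodd
  simp only [inverseStereographic_neg hz, neg_neg, neg_sub]

theorem image_of_coincidence_set (f : S2 → EuclideanSpace ℝ (Fin 2)) (hf : Continuous f) :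
    (f '' {x : S2 | f x = f (-x)}).Nonempty ∧ IsCompact (f '' {x : S2 | f x = f (-x)}) := by
  let e := Complex.orthonormalBasisOneI.repr.symm
  obtain ⟨x, hx⟩ := exists_apply_eq_apply_neg (f := e ∘ f) (by fun_prop)
  have hclosed : IsClosed {x : S2 | f x = f (-x)} := isClosed_eq hf (hf.comp continuous_neg)
  exact ⟨⟨f x, x, e.injective hx, rfl⟩, hclosed.isCompact.image hf⟩
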